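/- arXiv:1511.05684 — 2 statements merged into one kernel-verified Lean document; each statement's English description precedes it below -/
import Mathlib

section
/- Let z : {(s,t) : s > 0} → ℝ⁴ (with the neutral metric ⟨x,y⟩ = x₁y₁ + x₂y₂ − x₃y₃ − x₄y₄) be given by z(s,t) = (−4s^{1/2}cos t + s·sin t + (1/2)cos t, −4s^{1/2}sin t − s·cos t + (1/2)sin t, −4s^{1/2}sin t − s·cos t − (1/2)sin t, −4s^{1/2}cos t + s·sin t − (1/2)cos t). Then ⟨z_s, z_s⟩ = 0, ⟨z_s, z_t⟩ = −1, and ⟨z_t, z_t⟩ = −8·s^{1/2}. -/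
/-!
The surface is a rotation surface `z(s,t) = R_t γ(s)`, with profile curve
`γ(s) = (a, -s, -s, b)`, `a = -4√s + 1/2`, `b = -4√s - 1/2`, where `R_t` rotates the
`(x₁,x₂)`- and `(x₄,x₃)`-planes by the angle `t`. Both `R_t` and its generator `J` are
isometries of the neutral metric, and `z_s = R_t γ'`, `z_t = R_t Jγ`. Hence the three
products are `⟨γ',γ'⟩ = 0` (as `γ'₁ = γ'₄` and `γ'₂ = γ'₃`), `⟨γ',Jγ⟩ = b - a = -1` and
`⟨γ,γ⟩ = a² - b² = (a - b)(a + b) = -8√s`.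
-/

open Real

/-- The neutral (index 2) inner product on ℝ⁴. -/
def neutralInner (x y : Fin 4 → ℝ) : ℝ :=
  x 0 * y 0 + x 1 * y 1 - x 2 * y 2 - x 3 * y 3

noncomputable def neutralRot (t : ℝ) (x : Fin 4 → ℝ) : Fin 4 → ℝ :=
  ![x 0 * cos t - x 1 * sin t, x 0 * sin t + x 1 * cos t,
    x 3 * sin t + x 2 * cos t, x 3 * cos t - x 2 * sin t]

def neutralRotGen (x : Fin 4 → ℝ) : Fin 4 → ℝ :=
  ![-x 1, x 0, x 3, -x 2]

theorem neutralInner_neutralRot (t : ℝ) (x y : Fin 4 → ℝ) :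
    neutralInner (neutralRot t x) (neutralRot t y) = neutralInner x y := by
  simp only [neutralInner, neutralRot, Matrix.cons_val]
  linear_combination (x 0 * y 0 + x 1 * y 1 - x 2 * y 2 - x 3 * y 3) * sin_sq_add_cos_sq t

theorem neutralInner_neutralRotGen (x y : Fin 4 → ℝ) :
    neutralInner (neutralRotGen x) (neutralRotGen y) = neutralInner x y := by
  simp only [neutralInner, neutralRotGen, Matrix.cons_val]
  ring

theorem hasDerivAt_neutralRot_angle (x : Fin 4 → ℝ) (t : ℝ) :
    HasDerivAt (fun t => neutralRot t x) (neutralRot t (neutralRotGen x)) t := by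
  rw [hasDerivAt_pi]
  intro i
  have hc := hasDerivAt_cos t
  have hs := hasDerivAt_sin t
  fin_cases i <;>
  [refine ((hc.const_mul (x 0)).sub (hs.const_mul (x 1))).congr_deriv ?_;
    refine ((hs.const_mul (x 0)).add (hc.const_mul (x 1))).congr_deriv ?_;
    refine ((hs.const_mul (x 3)).add (hc.const_mul (x 2))).congr_deriv ?_;
    refine ((hc.const_mul (x 3)).sub (hs.const_mul (x 2))).congr_deriv ?_] <;>
  simp [neutralRot, neutralRotGen] <;> ring

theorem HasDerivAt.neutralRot {γ : ℝ → Fin 4 → ℝ} {γ' : Fin 4 → ℝ} {s : ℝ} (t : ℝ)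
    (h : HasDerivAt γ γ' s) : HasDerivAt (fun s => neutralRot t (γ s)) (neutralRot t γ') s := by
  rw [hasDerivAt_pi] at h ⊢
  intro i
  fin_cases i
  · exact ((h 0).mul_const _).sub ((h 1).mul_const _)
  · exact ((h 0).mul_const _).add ((h 1).mul_const _)
  · exact ((h 3).mul_const _).add ((h 2).mul_const _)
  · exact ((h 3).mul_const _).sub ((h 2).mul_const _)

theorem HasDerivAt.fun_deriv_apply {𝕜 ι E : Type*} [NontriviallyNormedField 𝕜] [Fintype ι]
    [NormedAddCommGroup E] [NormedSpace 𝕜 E] {φ : 𝕜 → ι → E} {φ' : ι → E} {x : 𝕜}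
    (h : HasDerivAt φ φ' x) : (fun i => _root_.deriv (fun y => φ y i) x) = φ' :=
  funext fun i => (hasDerivAt_pi.1 h i).deriv

/-- The explicit example surface `z(s,t)` in `E⁴₂` satisfies
`⟨z_s,z_s⟩ = 0`, `⟨z_s,z_t⟩ = -1`, `⟨z_t,z_t⟩ = -8√s` for `s > 0`. -/
theorem stmt_7 :
    let z : ℝ → ℝ → Fin 4 → ℝ := fun s t =>
      ![-4 * Real.sqrt s * Real.cos t + s * Real.sin t + (1/2) * Real.cos t,
        -4 * Real.sqrt s * Real.sin t - s * Real.cos t + (1/2) * Real.sin t,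
        -4 * Real.sqrt s * Real.sin t - s * Real.cos t - (1/2) * Real.sin t,
        -4 * Real.sqrt s * Real.cos t + s * Real.sin t - (1/2) * Real.cos t]
    ∀ s t, 0 < s →
      neutralInner (fun i => deriv (fun s' => z s' t i) s)
        (fun i => deriv (fun s' => z s' t i) s) = 0 ∧
      neutralInner (fun i => deriv (fun s' => z s' t i) s)
        (fun i => deriv (fun t' => z s t' i) t) = -1 ∧
      neutralInner (fun i => deriv (fun t' => z s t' i) t)
        (fun i => deriv (fun t' => z s t' i) t) = -8 * Real.sqrt s := by
  intro z s t hs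
  set γ : ℝ → Fin 4 → ℝ := fun s => ![-4 * √s + 1/2, -s, -s, -4 * √s - 1/2]
  have hz : ∀ s t, z s t = neutralRot t (γ s) := by
    intro s t
    ext i
    fin_cases i <;> simp [z, γ, neutralRot] <;> ring
  have hγ' : HasDerivAt γ ![-2 / √s, -1, -1, -2 / √s] s := by
    have ha (e : ℝ) : HasDerivAt (fun s => -4 * √s + e) (-2 / √s) s :=
      (((hasDerivAt_sqrt hs.ne').const_mul (-4)).add_const e).congr_deriv (by field_simp; ring)
    rw [hasDerivAt_pi]
    intro i
    fin_cases i
    exacts [ha _, (hasDerivAt_id s).neg, (hasDerivAt_id s).neg, ha _]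
  simp only [hz]
  rw [(hγ'.neutralRot t).fun_deriv_apply, (hasDerivAt_neutralRot_angle (γ s) t).fun_deriv_apply,
    neutralInner_neutralRot, neutralInner_neutralRot, neutralInner_neutralRot,
    neutralInner_neutralRotGen]
  refine ⟨?_, ?_, ?_⟩ <;> simp [neutralInner, neutralRotGen, γ] <;> ring
end

section
/- Let θ : ℝ² → ℝ be smooth, η₀ = (1,0,0,1), η₁ = (0,1/√2,1/√2,0), η₂ = (0,−1/√2,1/√2,0) in ℝ⁴ with the neutral metric, and let z(u,v) = (θ(u,v), (u−v)/√2, (u+v)/√2, θ(u,v)). Define the Gauss map G = z_u ∧ z_v ∈ Λ²ℝ⁴. Then G = η₀ ∧ (θ_u·η₂ − θ_v·η₁) + η₁ ∧ η₂, and ⟨G, G⟩ = −1 with respect to the induced inner product on Λ²ℝ⁴. -/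
/-- Signature of the neutral metric on ℝ⁴: `(+,+,-,-)`. -/
def sgn : Fin 4 → ℝ := ![1, 1, -1, -1]

/-- The wedge product of two vectors of ℝ⁴, as an antisymmetric 4×4 array
representing the bivector `a ∧ b`. -/
def wedge (a b : Fin 4 → ℝ) : Fin 4 → Fin 4 → ℝ := fun i j => a i * b j - a j * b i

/-- The inner product on `Λ²ℝ⁴` induced by the neutral metric, in terms of the
antisymmetric-array representation; on simple bivectors it agrees with
`⟨a∧b, c∧d⟩ = ⟨a,c⟩⟨b,d⟩ - ⟨a,d⟩⟨b,c⟩`. -/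
noncomputable def bivInner (A B : Fin 4 → Fin 4 → ℝ) : ℝ :=
  (1 / 2) * ∑ i : Fin 4, ∑ j : Fin 4, sgn i * sgn j * A i j * B i j

/-- For smooth `θ` and the surface `z(u,v) = (θ, (u-v)/√2, (u+v)/√2, θ)`, the
Gauss map `G = z_u ∧ z_v` equals `η₀ ∧ (θ_u η₂ - θ_v η₁) + η₁ ∧ η₂` and
satisfies `⟨G,G⟩ = -1`. -/
theorem stmt_16 (θ : ℝ → ℝ → ℝ) (hθ : ContDiff ℝ (⊤ : ℕ∞) (Function.uncurry θ)) :
    let η₀ : Fin 4 → ℝ := ![1, 0, 0, 1]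
    let η₁ : Fin 4 → ℝ := ![0, 1 / Real.sqrt 2, 1 / Real.sqrt 2, 0]
    let η₂ : Fin 4 → ℝ := ![0, -(1 / Real.sqrt 2), 1 / Real.sqrt 2, 0]
    let z : ℝ → ℝ → Fin 4 → ℝ := fun u v =>
      ![θ u v, (u - v) / Real.sqrt 2, (u + v) / Real.sqrt 2, θ u v]
    ∀ u v,
      let zu : Fin 4 → ℝ := fun i => deriv (fun u' => z u' v i) u
      let zv : Fin 4 → ℝ := fun i => deriv (fun v' => z u v' i) v
      let G := wedge zu zv
      G = (fun i j =>
          wedge η₀ (fun k => deriv (fun u' => θ u' v) u * η₂ k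
            - deriv (fun v' => θ u v') v * η₁ k) i j
          + wedge η₁ η₂ i j) ∧
      bivInner G G = -1 := by
  intro η₀ η₁ η₂ z u v zu zv G
  have hd := hθ.differentiable (by simp)
  have hdu : Differentiable ℝ (fun u' => θ u' v) :=
    hd.comp (differentiable_id.prodMk (differentiable_const v))
  have hdv : Differentiable ℝ (fun v' => θ u v') :=
    hd.comp ((differentiable_const u).prodMk differentiable_id)
  set a := deriv (fun u' => θ u' v) u with ha
  set b := deriv (fun v' => θ u v') v with hb
  have s2 : Real.sqrt 2 * Real.sqrt 2 = 2 := Real.mul_self_sqrt (by norm_num)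
  have sne : Real.sqrt 2 ≠ 0 := by positivity
  have hzu : zu = ![a, 1 / Real.sqrt 2, 1 / Real.sqrt 2, a] := by
    funext i
    fin_cases i <;>
      simp [zu, z, deriv_div_const, deriv_sub_const, deriv_add_const, one_div, ha]
  have hsub : deriv (fun v' => u - v') v = -1 := ((hasDerivAt_id v).const_sub u).deriv
  have hadd : deriv (fun v' => u + v') v = 1 := by
    simpa using ((hasDerivAt_id v).const_add u).deriv
  have hzv : zv = ![b, -(1 / Real.sqrt 2), 1 / Real.sqrt 2, b] := by
    funext i
    fin_cases i <;>
      simp [zv, z, deriv_div_const, hsub, hadd, one_div] <;> ring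
  constructor
  · funext i j
    fin_cases i <;> fin_cases j <;>
      simp [G, wedge, hzu, hzv, η₀, η₁, η₂] <;> ring
  · simp only [G, bivInner, wedge, hzu, hzv, sgn, Fin.sum_univ_four]
    simp
    field_simp
    nlinarith [s2]
end
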